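/- (Pruning/commitment lemma) Let σ be a partial layout of F ⊆ E of width at most k, and suppose there exists e ∈ E \ F with d(F ∪ {e}) ≤ d(F). Then σ is k-extendable if and only if the partial layout σ' of F ∪ {e} obtained by appending e at the end of σ is k-extendable. -/

import Mathlib

variable {V : Type*} [Fintype V] [DecidableEq V]

/-- `Vs F` is the set of endpoints of edges in `F`. -/
def Vs (F : Finset (Sym2 V)) : Finset V :=
  Finset.univ.filter (fun v => ∃ e ∈ F, v ∈ e)

/-- The set of endpoints of a single edge. -/
def eset (e : Sym2 V) : Finset V := Finset.univ.filter (fun v => v ∈ e)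

/-- `mids E F` is mid(F) = V(F) ∩ V(E \ F), relative to the edge set `E`. -/
def mids (E F : Finset (Sym2 V)) : Finset V := Vs F ∩ Vs (E \ F)

/-- `dd E F` is d(F) = |mid(F)|, relative to the edge set `E`. -/
def dd (E F : Finset (Sym2 V)) : ℕ := (mids E F).card

/-- A layout of the edge set `E`: a duplicate-free list enumerating `E`
(equivalently, a bijection {1,…,m} → E). -/
def IsLayout (E : Finset (Sym2 V)) (L : List (Sym2 V)) : Prop :=
  L.Nodup ∧ L.toFinset = E

/-- The (partial) layout `L` has width at most `k` w.r.t. the edge set `E`: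
every prefix `π_{≤ i}` satisfies d(π_{≤ i}) ≤ k. -/
def WidthLE (E : Finset (Sym2 V)) (L : List (Sym2 V)) (k : ℕ) : Prop :=
  ∀ i, dd E (L.take i).toFinset ≤ k

/-- The linearwidth of the edge set `E`: the minimum width of a layout of `E`. -/
noncomputable def lw (E : Finset (Sym2 V)) : ℕ :=
  sInf {k | ∃ L, IsLayout E L ∧ WidthLE E L k}

/-- The number of edges of `S` incident to `u`. -/
def degIn (S : Finset (Sym2 V)) (u : V) : ℕ := (S.filter (fun e => u ∈ e)).card

/-- `X` is a path decomposition of `G`, given as a list of bags. -/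
def IsPD (G : SimpleGraph V) (X : List (Finset V)) : Prop :=
  (∀ v : V, ∃ B ∈ X, v ∈ B) ∧
  (∀ e ∈ G.edgeSet, ∃ B ∈ X, eset e ⊆ B) ∧
  (∀ v : V, ∀ i j l : ℕ, i ≤ j → j ≤ l → l < X.length →
    v ∈ X.getD i ∅ → v ∈ X.getD l ∅ → v ∈ X.getD j ∅)

/-- The pathwidth of `G`: the minimum over path decompositions of (max bag size) − 1. -/
noncomputable def pw (G : SimpleGraph V) : ℕ :=
  sInf {k | ∃ X, IsPD G X ∧ ∀ B ∈ X, B.card ≤ k + 1}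

/-- The closure F* of `F` in `E`: all edges of `E` with both endpoints in `V(F)`. -/
def cl (E F : Finset (Sym2 V)) : Finset (Sym2 V) := E.filter (fun e => eset e ⊆ Vs F)

/-- A partial layout `S` is `k`-extendable: it is a prefix of some layout
of `E` of width at most `k`. -/
def Extendable (E : Finset (Sym2 V)) (k : ℕ) (S : List (Sym2 V)) : Prop :=
  ∃ L, IsLayout E L ∧ WidthLE E L k ∧ S <+: L

/-!
Appending `e` to `P` changes `d` by `|mid(P ∪ {e}) \ mid(P)| - |mid(P) \ mid(P ∪ {e})|`. The first
set consists of the ends of `e` outside `V(P)` that still meet `E \ (P ∪ {e})`, the second of the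
ends of `e` in `V(P)` whose only edge outside `P` is `e`; the first shrinks and the second grows as
`P` grows. Hence `d(P ∪ {e}) ≤ d(P)` for every `P ⊇ F` avoiding `e`, and in any layout extending
`σ` one may move `e` forward to position `|F| + 1`: each prefix that now contains `e` early has
`d` at most that of the corresponding old prefix, and all other prefix sets are unchanged.
-/

open Finset

lemma mem_Vs {F : Finset (Sym2 V)} {v : V} : v ∈ Vs F ↔ ∃ f ∈ F, v ∈ f := by
  simp [Vs]

lemma Vs_mono {F P : Finset (Sym2 V)} (h : F ⊆ P) : Vs F ⊆ Vs P := fun _ hv =>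
  let ⟨f, hf, hvf⟩ := mem_Vs.mp hv
  mem_Vs.mpr ⟨f, h hf, hvf⟩

lemma mem_Vs_insert {P : Finset (Sym2 V)} {e : Sym2 V} {v : V} :
    v ∈ Vs (insert e P) ↔ v ∈ e ∨ v ∈ Vs P := by
  simp [mem_Vs]

lemma mem_Vs_sdiff_of_mem {E P : Finset (Sym2 V)} {e : Sym2 V} (heE : e ∈ E) (heP : e ∉ P)
    {v : V} : v ∈ Vs (E \ P) ↔ v ∈ e ∨ v ∈ Vs (E \ insert e P) := by
  have : insert e (E \ insert e P) = E \ P := by grind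
  rw [← mem_Vs_insert, this]

lemma dd_insert_le_of_subset {E F P : Finset (Sym2 V)} {e : Sym2 V} (heE : e ∈ E) (heP : e ∉ P)
    (hFP : F ⊆ P) (hd : dd E (insert e F) ≤ dd E F) : dd E (insert e P) ≤ dd E P := by
  have heF : e ∉ F := fun h => heP (hFP h)
  rw [dd, dd, ← card_sdiff_le_card_sdiff_iff] at hd ⊢
  calc #(mids E (insert e P) \ mids E P)
      ≤ #(mids E (insert e F) \ mids E F) := card_le_card ?_
    _ ≤ #(mids E F \ mids E (insert e F)) := hd
    _ ≤ #(mids E P \ mids E (insert e P)) := card_le_card ?_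
  all_goals
    intro v
    have hVs : v ∈ Vs F → v ∈ Vs P := (Vs_mono hFP ·)
    have hVs' : v ∈ Vs (E \ insert e P) → v ∈ Vs (E \ insert e F) :=
      (Vs_mono (sdiff_subset_sdiff subset_rfl (insert_subset_insert e hFP)) ·)
    simp only [mids, mem_sdiff, mem_inter, mem_Vs_insert,
      mem_Vs_sdiff_of_mem heE heP, mem_Vs_sdiff_of_mem heE heF]
    grind

lemma widthLE_iff_forall_prefix {E : Finset (Sym2 V)} {L : List (Sym2 V)} {k : ℕ} :
    WidthLE E L k ↔ ∀ P, P <+: L → dd E P.toFinset ≤ k := by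
  refine ⟨fun h P hP => ?_, fun h i => h _ (L.take_prefix i)⟩
  rw [List.prefix_iff_eq_take.mp hP]
  exact h _

lemma List.prefix_append_cases {α : Type*} {P A B : List α} (h : P <+: A ++ B) :
    P <+: A ∨ ∃ Q, Q <+: B ∧ P = A ++ Q := by
  obtain ⟨R, hR⟩ := h
  rcases List.append_eq_append_iff.mp hR with ⟨A', rfl, -⟩ | ⟨Q, rfl, rfl⟩
  · exact .inl (List.prefix_append P A')
  · exact .inr ⟨Q, List.prefix_append Q R, rfl⟩

lemma WidthLE.move_forward {E : Finset (Sym2 V)} {k : ℕ} {S B C : List (Sym2 V)} {e : Sym2 V}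
    (hL : WidthLE E (S ++ B ++ e :: C) k)
    (hfree : ∀ Q, Q <+: B → dd E (insert e (S ++ Q).toFinset) ≤ dd E (S ++ Q).toFinset) :
    WidthLE E (S ++ e :: (B ++ C)) k := by
  rw [widthLE_iff_forall_prefix] at hL ⊢
  intro P hP
  rcases List.prefix_append_cases hP with hPS | ⟨T, hT, rfl⟩
  · exact hL P (hPS.trans (by simp))
  rcases List.prefix_cons_iff.mp hT with rfl | ⟨Q, rfl, hQ⟩
  · exact hL _ (by simp)
  rcases List.prefix_append_cases hQ with hQB | ⟨R, hR, rfl⟩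
  · calc dd E (S ++ e :: Q).toFinset = dd E (insert e (S ++ Q).toFinset) := by
          congr 1; ext; simp
      _ ≤ dd E (S ++ Q).toFinset := hfree Q hQB
      _ ≤ k := hL _ (by simpa [List.append_assoc] using hQB.trans (List.prefix_append B _))
  · calc dd E (S ++ e :: (B ++ R)).toFinset = dd E (S ++ B ++ e :: R).toFinset := by
          congr 1; ext; simp
      _ ≤ k := hL _ (by simpa using hR)

theorem stmt12_general (E F : Finset (Sym2 V)) (k : ℕ)
    (S : List (Sym2 V)) (hSF : S.toFinset = F)
    (e : Sym2 V) (he : e ∈ E \ F)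
    (hd : dd E (insert e F) ≤ dd E F) :
    Extendable E k S ↔ Extendable E k (S ++ [e]) := by
  obtain ⟨heE, heF⟩ := mem_sdiff.mp he
  refine ⟨?_, fun ⟨L, hL, hwL, hSL⟩ => ⟨L, hL, hwL, (List.prefix_append S [e]).trans hSL⟩⟩
  rintro ⟨L, ⟨hLnd, hLE⟩, hwL, T, rfl⟩
  have heS : e ∉ S := fun h => heF (hSF ▸ List.mem_toFinset.mpr h)
  obtain ⟨B, C, rfl⟩ : ∃ B C, T = B ++ e :: C :=
    List.append_of_mem (by rw [← hLE] at heE; simpa [heS] using heE)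
  have heB : e ∉ B := fun h =>
    (List.nodup_cons.mp (List.nodup_middle.mp hLnd.of_append_right)).1 (List.mem_append_left C h)
  have hperm : (S ++ e :: (B ++ C)).Perm (S ++ (B ++ e :: C)) := List.perm_middle.symm.append_left S
  refine ⟨S ++ e :: (B ++ C),
    ⟨hperm.nodup_iff.mpr hLnd, by rw [List.toFinset_eq_of_perm _ _ hperm, hLE]⟩, ?_, B ++ C, by simp⟩
  refine WidthLE.move_forward (by simpa using hwL) fun Q hQ => ?_
  refine dd_insert_le_of_subset heE ?_ (by simp [← hSF]) hd
  simpa [heS] using fun h => heB (hQ.subset h)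

/-- Pruning lemma: if σ is a width-≤-k partial layout of F and e ∈ E \ F satisfies
d(F ∪ {e}) ≤ d(F), then σ is k-extendable iff σ with e appended is k-extendable. -/
theorem stmt12 (E F : Finset (Sym2 V)) (hFE : F ⊆ E) (k : ℕ)
    (S : List (Sym2 V)) (hnd : S.Nodup) (hSF : S.toFinset = F)
    (hw : WidthLE E S k) (e : Sym2 V) (he : e ∈ E \ F)
    (hd : dd E (insert e F) ≤ dd E F) :
    Extendable E k S ↔ Extendable E k (S ++ [e]) :=
  stmt12_general E F k S hSF e he hd
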